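/- arXiv:1509.01746 — 3 statements merged into one kernel-verified Lean document; each statement's English description precedes it below -/
import Mathlib

section
/- The set G_k^n of formal words t_i^{p_i} t_{i+1}^{p_{i+1}} … t_{i−1}^{p_{i−1}} (indices cyclic mod k, exponents in Z_{n/2}), equipped with the right-multiplication ∘ by the generators described, forms a group of order k·(n/2)^k with identity t_0^0 t_1^0 … t_{k−1}^0, in which every generator has an inverse among the generators. -/
/-- A node of the digraph DPillar_{n,k}: a column index in `ZMod k` together with a
row-index, a length-`k` string over an alphabet of size `n/2`. -/
abbrev DNode (n k : ℕ) := ZMod k × (ZMod k → ZMod (n / 2))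

/-- The edge relation of the digraph DPillar_{n,k}: c-edges, a-edges, b-edges, d-edges. -/
def DPillarEdge (n k : ℕ) (u w : DNode n k) : Prop :=
  (w.1 = u.1 + 1 ∧ ∀ i, i ≠ u.1 → w.2 i = u.2 i) ∨
  (w.1 = u.1 - 1 ∧ ∀ i, i ≠ u.1 - 1 → w.2 i = u.2 i) ∨
  (w.1 = u.1 ∧ w.2 ≠ u.2 ∧ ∀ i, i ≠ u.1 → w.2 i = u.2 i) ∨
  (w.1 = u.1 ∧ w.2 ≠ u.2 ∧ ∀ i, i ≠ u.1 - 1 → w.2 i = u.2 i)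

/-- Right action of an a-generator with parameter `q`. -/
def aMap (n k : ℕ) (q : ZMod (n / 2)) : DNode n k → DNode n k :=
  fun ip => (ip.1 - 1, Function.update ip.2 (ip.1 - 1) (ip.2 (ip.1 - 1) + q))

/-- Right action of a b-generator with parameter `q`. -/
def bMap (n k : ℕ) (q : ZMod (n / 2)) : DNode n k → DNode n k :=
  fun ip => (ip.1, Function.update ip.2 ip.1 (ip.2 ip.1 + q))

/-- Right action of a c-generator with parameter `q`. -/
def cMap (n k : ℕ) (q : ZMod (n / 2)) : DNode n k → DNode n k :=
  fun ip => (ip.1 + 1, Function.update ip.2 ip.1 (ip.2 ip.1 + q))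

/-- Right action of a d-generator with parameter `q`. -/
def dMap (n k : ℕ) (q : ZMod (n / 2)) : DNode n k → DNode n k :=
  fun ip => (ip.1, Function.update ip.2 (ip.1 - 1) (ip.2 (ip.1 - 1) + q))

/-- The generators of G_k^n, realised as permutations of the pairs `(i, p)`. -/
def genSet (n k : ℕ) : Set (Equiv.Perm (DNode n k)) :=
  {g | ∃ q : ZMod (n / 2),
    ⇑g = aMap n k q ∨ ⇑g = bMap n k q ∨ ⇑g = cMap n k q ∨ ⇑g = dMap n k q}

/-!
Multiplying pairs by `(i, p) ⋆ (j, r) = (i + j, y ↦ p y + r (y - i))` makes them the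
regular wreath product `ℤ_{n/2} ≀ ℤ_k`, and each generator is a right translation `x ↦ x ⋆ g`:
`a_q`, `b_q`, `c_q`, `d_q` translate by `(-1, q δ₋₁)`, `(0, q δ₀)`, `(1, q δ₀)`, `(0, q δ₋₁)`.
Right translations form a group acting simply transitively, so it remains to see that the
generators give all of them: `c_0` yields the shifts `(i, 0)`, conjugating `b_q` by these yields
every `(0, q δᵢ)`, and these generate the translations `(0, p)`. The order of the group is then
the number of pairs.
-/

theorem Function.update_add_eq_add_single_sub {ι M : Type*} [AddCommGroup ι] [DecidableEq ι]
    [AddMonoid M] (p : ι → M) (i j : ι) (q : M) :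
    Function.update p j (p j + q) = fun y => p y + (Pi.single (j - i) q : ι → M) (y - i) := by
  funext y
  by_cases hy : y = j
  · subst hy; simp
  · simp [hy]

theorem Equiv.Perm.coe_inv_eq_of_apply_eq {α : Type*} {g : Equiv.Perm α} {f : α → α}
    (h : ∀ x, g (f x) = x) : ⇑g⁻¹ = f :=
  funext fun x => Equiv.Perm.inv_eq_iff_eq.2 (h x).symm

namespace DNode

variable {n k : ℕ}

def wreathMul (x g : DNode n k) : DNode n k := (x.1 + g.1, fun y => x.2 y + g.2 (y - x.1))

def wreathInv (g : DNode n k) : DNode n k := (-g.1, fun y => -g.2 (y + g.1))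

theorem wreathMul_assoc (x g h : DNode n k) :
    wreathMul (wreathMul x g) h = wreathMul x (wreathMul g h) := by
  refine Prod.ext (add_assoc ..) (funext fun y => ?_)
  simp only [wreathMul, add_assoc, sub_sub]

theorem wreathMul_zero (x : DNode n k) : wreathMul x 0 = x := by
  simp [wreathMul]

theorem zero_wreathMul (x : DNode n k) : wreathMul 0 x = x := by
  simp [wreathMul]

theorem wreathMul_wreathInv (g : DNode n k) : wreathMul g (wreathInv g) = 0 := by
  refine Prod.ext (add_neg_cancel _) (funext fun y => ?_)
  simp [wreathMul, wreathInv]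

theorem wreathInv_wreathMul (g : DNode n k) : wreathMul (wreathInv g) g = 0 := by
  refine Prod.ext (neg_add_cancel _) (funext fun y => ?_)
  simp [wreathMul, wreathInv]

theorem wreathMul_eq_iff {u g w : DNode n k} :
    wreathMul u g = w ↔ g = wreathMul (wreathInv u) w := by
  constructor
  · rintro rfl
    rw [← wreathMul_assoc, wreathInv_wreathMul, zero_wreathMul]
  · rintro rfl
    rw [← wreathMul_assoc, wreathMul_wreathInv, zero_wreathMul]

def rightMul (g : DNode n k) : Equiv.Perm (DNode n k) where
  toFun x := wreathMul x g
  invFun x := wreathMul x (wreathInv g)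
  left_inv x := by simp only [wreathMul_assoc, wreathMul_wreathInv, wreathMul_zero]
  right_inv x := by simp only [wreathMul_assoc, wreathInv_wreathMul, wreathMul_zero]

@[simp]
theorem rightMul_apply (g x : DNode n k) : rightMul g x = wreathMul x g := rfl

theorem rightMul_mul (g h : DNode n k) : rightMul g * rightMul h = rightMul (wreathMul h g) :=
  Equiv.ext fun x => wreathMul_assoc x h g

theorem rightMul_zero : rightMul (0 : DNode n k) = 1 :=
  Equiv.ext wreathMul_zero

theorem rightMul_wreathInv (g : DNode n k) : rightMul (wreathInv g) = (rightMul g)⁻¹ :=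
  eq_inv_of_mul_eq_one_left (by rw [rightMul_mul, wreathMul_wreathInv, rightMul_zero])

variable (n k) in
def rightMulSubgroup : Subgroup (Equiv.Perm (DNode n k)) where
  carrier := Set.range rightMul
  one_mem' := ⟨0, rightMul_zero⟩
  mul_mem' := by
    rintro _ _ ⟨g, rfl⟩ ⟨h, rfl⟩
    exact ⟨wreathMul h g, (rightMul_mul g h).symm⟩
  inv_mem' := by
    rintro _ ⟨g, rfl⟩
    exact ⟨wreathInv g, rightMul_wreathInv g⟩

theorem existsUnique_rightMulSubgroup_apply_eq (u w : DNode n k) :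
    ∃! e : rightMulSubgroup n k, (e : Equiv.Perm (DNode n k)) u = w := by
  refine ⟨⟨rightMul (wreathMul (wreathInv u) w), _, rfl⟩, wreathMul_eq_iff.2 rfl, ?_⟩
  rintro ⟨_, g, rfl⟩ hg
  exact Subtype.ext (congrArg rightMul (wreathMul_eq_iff.1 hg))

theorem aMap_eq_rightMul (q : ZMod (n / 2)) :
    aMap n k q = rightMul (-1, Pi.single (-1) q) := by
  funext x
  simp [aMap, wreathMul, Function.update_add_eq_add_single_sub _ x.1, sub_eq_add_neg]

theorem bMap_eq_rightMul (q : ZMod (n / 2)) : bMap n k q = rightMul (0, Pi.single 0 q) := by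
  funext x
  simp [bMap, wreathMul, Function.update_add_eq_add_single_sub _ x.1]

theorem cMap_eq_rightMul (q : ZMod (n / 2)) : cMap n k q = rightMul (1, Pi.single 0 q) := by
  funext x
  simp [cMap, wreathMul, Function.update_add_eq_add_single_sub _ x.1]

theorem dMap_eq_rightMul (q : ZMod (n / 2)) : dMap n k q = rightMul (0, Pi.single (-1) q) := by
  funext x
  simp [dMap, wreathMul, Function.update_add_eq_add_single_sub _ x.1]

theorem genSet_subset_rightMulSubgroup : genSet n k ⊆ rightMulSubgroup n k := by
  rintro g ⟨q, h | h | h | h⟩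
  · exact ⟨_, (Equiv.coe_fn_injective (h.trans (aMap_eq_rightMul q))).symm⟩
  · exact ⟨_, (Equiv.coe_fn_injective (h.trans (bMap_eq_rightMul q))).symm⟩
  · exact ⟨_, (Equiv.coe_fn_injective (h.trans (cMap_eq_rightMul q))).symm⟩
  · exact ⟨_, (Equiv.coe_fn_injective (h.trans (dMap_eq_rightMul q))).symm⟩

theorem inv_mem_genSet : ∀ g ∈ genSet n k, g⁻¹ ∈ genSet n k := by
  rintro g ⟨q, h | h | h | h⟩ <;> refine ⟨-q, ?_⟩
  · exact Or.inr (Or.inr (Or.inl (Equiv.Perm.coe_inv_eq_of_apply_eq fun x => by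
      simp [h, aMap, cMap])))
  · exact Or.inr (Or.inl (Equiv.Perm.coe_inv_eq_of_apply_eq fun x => by simp [h, bMap]))
  · exact Or.inl (Equiv.Perm.coe_inv_eq_of_apply_eq fun x => by simp [h, aMap, cMap])
  · exact Or.inr (Or.inr (Or.inr (Equiv.Perm.coe_inv_eq_of_apply_eq fun x => by
      simp [h, dMap])))

theorem rightMul_natCast_shift (j : ℕ) :
    rightMul ((j : ZMod k), (0 : ZMod k → ZMod (n / 2))) = rightMul (1, 0) ^ j := by
  induction j with
  | zero => rw [Nat.cast_zero, Prod.mk_zero_zero, rightMul_zero, pow_zero]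
  | succ j ih =>
    rw [pow_succ, ← ih, rightMul_mul]
    congr 1
    ext <;> simp [wreathMul, add_comm]

theorem rightMul_conj_shift_single (i : ZMod k) (q : ZMod (n / 2)) :
    rightMul (-i, 0) * rightMul (0, Pi.single 0 q) * rightMul (i, 0) =
      rightMul (0, Pi.single i q) := by
  rw [rightMul_mul, rightMul_mul]
  congr 1
  ext <;> simp [wreathMul, Pi.single_apply, sub_eq_zero]

theorem rightMul_translation_add (p p' : ZMod k → ZMod (n / 2)) :
    rightMul (0, p + p') = rightMul (0, p') * rightMul (0, p) := by
  rw [rightMul_mul]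
  congr 1
  ext <;> simp [wreathMul]

theorem rightMul_eq_shift_mul_translation (g : DNode n k) :
    rightMul g = rightMul (g.1, 0) * rightMul (0, g.2) := by
  rw [rightMul_mul]
  congr 1
  ext <;> simp [wreathMul]

open Subgroup

variable [NeZero k]

theorem rightMul_shift_mem_closure_genSet (i : ZMod k) :
    rightMul (i, (0 : ZMod k → ZMod (n / 2))) ∈ closure (genSet n k) := by
  have hc : rightMul (1, 0) ∈ closure (genSet n k) :=
    subset_closure ⟨0, Or.inr (Or.inr (Or.inl (by rw [cMap_eq_rightMul, Pi.single_zero])))⟩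
  rw [← ZMod.natCast_zmod_val i, rightMul_natCast_shift]
  exact pow_mem hc _

theorem rightMul_single_mem_closure_genSet (i : ZMod k) (q : ZMod (n / 2)) :
    rightMul (0, Pi.single i q) ∈ closure (genSet n k) := by
  have hb : rightMul (0, Pi.single 0 q) ∈ closure (genSet n k) :=
    subset_closure ⟨q, Or.inr (Or.inl (bMap_eq_rightMul q).symm)⟩
  rw [← rightMul_conj_shift_single]
  exact mul_mem (mul_mem (rightMul_shift_mem_closure_genSet (-i)) hb)
    (rightMul_shift_mem_closure_genSet i)

theorem rightMul_translation_mem_closure_genSet (p : ZMod k → ZMod (n / 2)) :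
    rightMul (0, p) ∈ closure (genSet n k) := by
  induction p using Pi.single_induction with
  | zero => rw [Prod.mk_zero_zero, rightMul_zero]; exact one_mem _
  | add p p' hp hp' => rw [rightMul_translation_add]; exact mul_mem hp' hp
  | single i q => exact rightMul_single_mem_closure_genSet i q

theorem rightMul_mem_closure_genSet (g : DNode n k) : rightMul g ∈ closure (genSet n k) := by
  rw [rightMul_eq_shift_mul_translation]
  exact mul_mem (rightMul_shift_mem_closure_genSet g.1)
    (rightMul_translation_mem_closure_genSet g.2)

theorem closure_genSet_eq_rightMulSubgroup : closure (genSet n k) = rightMulSubgroup n k :=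
  le_antisymm ((closure_le _).2 genSet_subset_rightMulSubgroup)
    (by rintro _ ⟨g, rfl⟩; exact rightMul_mem_closure_genSet g)

end DNode

theorem dpillar_group_general (n k : ℕ) (hk : 2 ≤ k) :
    (∀ g ∈ genSet n k, g⁻¹ ∈ genSet n k) ∧
    (∀ u w : DNode n k,
      ∃! g : Subgroup.closure (genSet n k), (g : Equiv.Perm (DNode n k)) u = w) ∧
    Nat.card (Subgroup.closure (genSet n k)) = k * (n / 2) ^ k := by
  have : NeZero k := ⟨by omega⟩
  have simplyTransitive (u w : DNode n k) :
      ∃! g : Subgroup.closure (genSet n k), (g : Equiv.Perm (DNode n k)) u = w := by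
    rw [DNode.closure_genSet_eq_rightMulSubgroup]
    exact DNode.existsUnique_rightMulSubgroup_apply_eq u w
  refine ⟨DNode.inv_mem_genSet, simplyTransitive, ?_⟩
  rw [Nat.card_eq_of_bijective _ ((Function.bijective_iff_existsUnique _).2 (simplyTransitive 0)),
    Nat.card_prod, Nat.card_fun, Nat.card_zmod, Nat.card_zmod]

/-- the right-multiplications by the a-, b-, c-, d-generators generate a
group of order k·(n/2)^k acting simply transitively on the k·(n/2)^k pairs, and every
generator has an inverse among the generators. -/
theorem dpillar_group (n k : ℕ) (hn : Even n) (hn2 : 2 ≤ n) (hk : 2 ≤ k) :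
    (∀ g ∈ genSet n k, g⁻¹ ∈ genSet n k) ∧
    (∀ u w : DNode n k,
      ∃! g : Subgroup.closure (genSet n k), (g : Equiv.Perm (DNode n k)) u = w) ∧
    Nat.card (Subgroup.closure (genSet n k)) = k * (n / 2) ^ k :=
  dpillar_group_general n k hk
end

section
/- The digraph DPillar_{n,k} is a Cayley graph: there is a group G of order k·(n/2)^k and a generating set S ⊆ G closed under inverses, together with a bijection φ from G to the nodes of DPillar_{n,k}, such that (φ(g), φ(h)) is an edge of DPillar_{n,k} if and only if g^{-1}h ∈ S. -/
/-!
The nodes themselves form the wreath product `ZMod (n/2) ≀ ZMod k`: the node `(a, f)` acts by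
`(c, v) ↦ (a + c, f + v (· - a))`. These translations act simply transitively, sending `0` to
`(a, f)`, and preserve each of the four kinds of edges, because each kind only constrains the column
difference and where the strings differ relative to the column. A digraph with such a regular group
of automorphisms is a Cayley graph of it, the connection set consisting of the elements that send
`0` to a neighbour of `0`; as edges are symmetric, this set is closed under inverses. It contains
the shift `(1, 0)` and the elements `(1, δ₀ t)`, and `(0, δᵢ t) = (i, 0) (1, δ₀ t) (-(i + 1), 0)`;
these generate the base group `(ZMod (n/2))^k`, hence with the shifts the whole group.
-/

section CayleyGraph

variable {X : Type*} (G : Subgroup (Equiv.Perm X)) (R : X → X → Prop) (x₀ : X)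

def connectionSet : Set G := {s | R x₀ ((s : Equiv.Perm X) x₀)}

variable {G R}

theorem rel_apply_iff_inv_mul_mem_connectionSet
    (hR : ∀ g : G, ∀ x y, R ((g : Equiv.Perm X) x) ((g : Equiv.Perm X) y) ↔ R x y) (g h : G) :
    R ((g : Equiv.Perm X) x₀) ((h : Equiv.Perm X) x₀) ↔ g⁻¹ * h ∈ connectionSet G R x₀ := by
  rw [← hR g⁻¹]
  simp [connectionSet, Equiv.Perm.inv_def]

theorem inv_mem_connectionSet
    (hR : ∀ g : G, ∀ x y, R ((g : Equiv.Perm X) x) ((g : Equiv.Perm X) y) ↔ R x y)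
    (hsymm : ∀ x y, R x y → R y x) {s : G} (hs : s ∈ connectionSet G R x₀) :
    s⁻¹ ∈ connectionSet G R x₀ := by
  simpa using (rel_apply_iff_inv_mul_mem_connectionSet x₀ hR s 1).mp (hsymm _ _ hs)

end CayleyGraph

theorem add_shift_eq_add_shift_iff {A β : Type*} [AddGroup A] [Add β] [IsLeftCancelAdd β]
    (a : A) (f v w : A → β) :
    ((fun i => f i + w (i - a)) = fun i => f i + v (i - a)) ↔ w = v := by
  refine ⟨fun h => funext fun j => ?_, fun h => h ▸ rfl⟩
  simpa using congrFun h (j + a)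

theorem forall_ne_add_shift_iff {A β : Type*} [AddCommGroup A] (a c : A) (v w : A → β) :
    (∀ i, i ≠ a + c → w (i - a) = v (i - a)) ↔ ∀ i, i ≠ c → w i = v i :=
  ((Equiv.addLeft a).forall_congr (by simp)).symm

namespace DPillar

variable {n k : ℕ}

def translate (p : DNode n k) : Equiv.Perm (DNode n k) where
  toFun q := (p.1 + q.1, fun i => p.2 i + q.2 (i - p.1))
  invFun q := (q.1 - p.1, fun i => q.2 (i + p.1) - p.2 (i + p.1))
  left_inv q := by ext <;> simp
  right_inv q := by ext <;> simp

@[simp]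
theorem translate_apply (p q : DNode n k) :
    translate p q = (p.1 + q.1, fun i => p.2 i + q.2 (i - p.1)) := rfl

@[simp]
theorem translate_apply_zero (p : DNode n k) : translate p 0 = p := by
  ext <;> simp

theorem translate_zero : translate (0 : DNode n k) = 1 := by
  ext q <;> simp

theorem translate_mul_translate (p q : DNode n k) :
    translate p * translate q = translate (translate p q) := by
  ext r i
  · simp [add_assoc]
  · simp [add_assoc, sub_sub]

theorem translate_inv (p : DNode n k) : (translate p)⁻¹ = translate ((translate p)⁻¹ 0) :=
  inv_eq_of_mul_eq_one_right <| by
    rw [translate_mul_translate, Equiv.Perm.coe_inv, Equiv.apply_symm_apply, translate_zero]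

theorem dPillarEdge_translate_iff (p u w : DNode n k) :
    DPillarEdge n k (translate p u) (translate p w) ↔ DPillarEdge n k u w := by
  have h₁ : p.1 + u.1 + 1 = p.1 + (u.1 + 1) := by ring
  have h₂ : p.1 + u.1 - 1 = p.1 + (u.1 - 1) := by ring
  simp only [DPillarEdge, translate_apply, h₁, h₂, add_right_inj, ne_eq,
    add_shift_eq_add_shift_iff]
  simp only [← ne_eq, forall_ne_add_shift_iff]

theorem dPillarEdge_symm (u w : DNode n k) : DPillarEdge n k u w → DPillarEdge n k w u := by
  rintro (⟨h₁, h₂⟩ | ⟨h₁, h₂⟩ | ⟨h₁, h₂, h₃⟩ | ⟨h₁, h₂, h₃⟩)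
  · refine Or.inr <| Or.inl ⟨by rw [h₁]; ring, fun i hi => (h₂ i ?_).symm⟩
    rwa [h₁, add_sub_cancel_right] at hi
  · exact Or.inl ⟨by rw [h₁]; ring, fun i hi => (h₂ i (by rwa [h₁] at hi)).symm⟩
  · refine Or.inr <| Or.inr <| Or.inl ⟨h₁.symm, h₂.symm, fun i hi => (h₃ i ?_).symm⟩
    rwa [h₁] at hi
  · refine Or.inr <| Or.inr <| Or.inr ⟨h₁.symm, h₂.symm, fun i hi => (h₃ i ?_).symm⟩
    rwa [h₁] at hi

variable (n k) in
def translationGroup : Subgroup (Equiv.Perm (DNode n k)) where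
  carrier := Set.range translate
  one_mem' := ⟨0, translate_zero⟩
  mul_mem' := by
    rintro _ _ ⟨p, rfl⟩ ⟨q, rfl⟩
    exact ⟨translate p q, (translate_mul_translate p q).symm⟩
  inv_mem' := by
    rintro _ ⟨p, rfl⟩
    exact ⟨_, (translate_inv p).symm⟩

def toTranslation (p : DNode n k) : translationGroup n k := ⟨translate p, p, rfl⟩

theorem toTranslation_zero : toTranslation (0 : DNode n k) = 1 :=
  Subtype.ext translate_zero

theorem toTranslation_mul_toTranslation (p q : DNode n k) :
    toTranslation p * toTranslation q = toTranslation (translate p q) :=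
  Subtype.ext (translate_mul_translate p q)

variable (n k) in
def orbitEquiv : translationGroup n k ≃ DNode n k where
  toFun g := (g : Equiv.Perm (DNode n k)) 0
  invFun := toTranslation
  left_inv := by
    rintro ⟨_, p, rfl⟩
    simp [toTranslation]
  right_inv := translate_apply_zero

theorem dPillarEdge_apply_iff (g : translationGroup n k) (u w : DNode n k) :
    DPillarEdge n k ((g : Equiv.Perm (DNode n k)) u) ((g : Equiv.Perm (DNode n k)) w) ↔
      DPillarEdge n k u w := by
  obtain ⟨_, p, rfl⟩ := g
  exact dPillarEdge_translate_iff p u w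

variable (n k) in
abbrev generators : Set (translationGroup n k) :=
  connectionSet (translationGroup n k) (DPillarEdge n k) 0

theorem toTranslation_mem_generators_iff (p : DNode n k) :
    toTranslation p ∈ generators n k ↔ DPillarEdge n k 0 p := by
  simp [connectionSet, toTranslation]

theorem toTranslation_one_single_mem_generators (t : ZMod (n / 2)) :
    toTranslation (1, Pi.single 0 t) ∈ generators n k :=
  (toTranslation_mem_generators_iff _).mpr <|
    Or.inl ⟨(zero_add 1).symm, fun i hi => by simp [Pi.single_eq_of_ne (show i ≠ 0 from hi)]⟩

theorem toTranslation_natCast_pow (m : ℕ) :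
    toTranslation ((1 : ZMod k), (0 : ZMod k → ZMod (n / 2))) ^ m = toTranslation (m, 0) := by
  induction m with
  | zero =>
    rw [pow_zero, Nat.cast_zero]
    exact toTranslation_zero.symm
  | succ m ih =>
    rw [pow_succ, ih, toTranslation_mul_toTranslation]
    congr 1
    ext <;> simp

theorem toTranslation_shift_mem_closure [NeZero k] (a : ZMod k) :
    toTranslation (a, (0 : ZMod k → ZMod (n / 2))) ∈ Subgroup.closure (generators n k) := by
  rw [← ZMod.natCast_zmod_val a, ← toTranslation_natCast_pow]
  refine pow_mem (Subgroup.subset_closure ?_) _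
  simpa using toTranslation_one_single_mem_generators (n := n) (k := k) (0 : ZMod (n / 2))

theorem toTranslation_single_mem_closure [NeZero k] (i : ZMod k) (t : ZMod (n / 2)) :
    toTranslation (0, Pi.single i t) ∈ Subgroup.closure (generators n k) := by
  have hconj : toTranslation (i, 0) * toTranslation (1, Pi.single 0 t) *
      toTranslation (-(i + 1), 0) = toTranslation (0, Pi.single i t) := by
    rw [toTranslation_mul_toTranslation, toTranslation_mul_toTranslation]
    congr 1
    ext j
    · simp
    · simp [Pi.single_apply, sub_eq_zero]
  rw [← hconj]
  have hgen := Subgroup.subset_closure (toTranslation_one_single_mem_generators (k := k) t)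
  exact mul_mem (mul_mem (toTranslation_shift_mem_closure i) hgen)
    (toTranslation_shift_mem_closure _)

theorem toTranslation_zero_mul_toTranslation_zero (f g : ZMod k → ZMod (n / 2)) :
    toTranslation (0, f) * toTranslation (0, g) = toTranslation (0, f + g) := by
  rw [toTranslation_mul_toTranslation]
  congr 1
  ext j <;> simp

theorem toTranslation_zero_mem_closure [NeZero k] (f : ZMod k → ZMod (n / 2)) :
    toTranslation (0, f) ∈ Subgroup.closure (generators n k) := by
  induction f using Pi.single_induction with
  | zero => exact toTranslation_zero ▸ one_mem _
  | add f g hf hg => exact toTranslation_zero_mul_toTranslation_zero f g ▸ mul_mem hf hg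
  | single i t => exact toTranslation_single_mem_closure i t

theorem closure_generators [NeZero k] : Subgroup.closure (generators n k) = ⊤ := by
  refine eq_top_iff.mpr fun g _ => ?_
  obtain ⟨p, rfl⟩ := (orbitEquiv n k).symm.surjective g
  have hsplit : toTranslation (0, p.2) * toTranslation (p.1, 0) = toTranslation p := by
    rw [toTranslation_mul_toTranslation]
    simp
  change toTranslation p ∈ _
  exact hsplit ▸ mul_mem (toTranslation_zero_mem_closure p.2) (toTranslation_shift_mem_closure p.1)

theorem card_translationGroup [NeZero k] : Nat.card (translationGroup n k) = k * (n / 2) ^ k := by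
  rw [Nat.card_congr (orbitEquiv n k), Nat.card_prod, Nat.card_fun, Nat.card_zmod, Nat.card_zmod]

end DPillar

open DPillar in
theorem dpillar_cayley_general (n k : ℕ) (hk : 2 ≤ k) :
    ∃ (G : Subgroup (Equiv.Perm (DNode n k))) (S : Set G) (φ : G ≃ DNode n k),
      Nat.card G = k * (n / 2) ^ k ∧
      Subgroup.closure S = ⊤ ∧
      (∀ s ∈ S, s⁻¹ ∈ S) ∧
      ∀ g h : G, DPillarEdge n k (φ g) (φ h) ↔ g⁻¹ * h ∈ S := by
  have : NeZero k := ⟨by omega⟩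
  exact ⟨translationGroup n k, generators n k, orbitEquiv n k, card_translationGroup,
    closure_generators, fun _ => inv_mem_connectionSet 0 dPillarEdge_apply_iff dPillarEdge_symm,
    rel_apply_iff_inv_mul_mem_connectionSet 0 dPillarEdge_apply_iff⟩

/-- DPillar_{n,k} is a Cayley graph: there is a group `G` of order
k·(n/2)^k, a generating set `S ⊆ G` closed under inverses, and a bijection `φ` from
`G` to the nodes such that `(φ g, φ h)` is an edge iff `g⁻¹ * h ∈ S`. -/
theorem dpillar_cayley (n k : ℕ) (hn : Even n) (hn2 : 2 ≤ n) (hk : 2 ≤ k) :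
    ∃ (G : Subgroup (Equiv.Perm (DNode n k))) (S : Set G) (φ : G ≃ DNode n k),
      Nat.card G = k * (n / 2) ^ k ∧
      Subgroup.closure S = ⊤ ∧
      (∀ s ∈ S, s⁻¹ ∈ S) ∧
      ∀ g h : G, DPillarEdge n k (φ g) (φ h) ↔ g⁻¹ * h ∈ S :=
  dpillar_cayley_general n k hk
end

section
/- The digraph DPillar_{n,k} is node-symmetric: for any two nodes u and w, there exists a graph automorphism of DPillar_{n,k} mapping u to w. -/
private lemma dpillar_cond_iff {m k : ℕ} (d x1 : ZMod k) (t : ZMod k → ZMod m)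
    (y2 x2 : ZMod k → ZMod m) :
    (∀ i, i ≠ x1 + d → y2 (i - d) + t i = x2 (i - d) + t i) ↔
      (∀ j, j ≠ x1 → y2 j = x2 j) := by
  constructor
  · intro h j hj
    have := h (j + d) (fun he => hj (by simpa using (add_left_inj d).mp he))
    simpa using this
  · intro h i hi
    have : i - d ≠ x1 := fun he => hi (by rw [← he, sub_add_cancel])
    rw [h _ this]

private lemma dpillar_eq_iff {m k : ℕ} (d : ZMod k) (t : ZMod k → ZMod m)
    (y2 x2 : ZMod k → ZMod m) :
    ((fun i => y2 (i - d) + t i) = (fun i => x2 (i - d) + t i)) ↔ y2 = x2 := by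
  constructor
  · intro h; funext j
    have := congrFun h (j + d)
    simpa using this
  · intro h; rw [h]

/-- DPillar_{n,k} is node-symmetric: for any two nodes `u`, `w` there
is a graph automorphism mapping `u` to `w`. -/
theorem dpillar_node_symmetric (n k : ℕ) (hn : Even n) (hn2 : 2 ≤ n) (hk : 2 ≤ k)
    (u w : DNode n k) :
    ∃ φ : DNode n k ≃ DNode n k, φ u = w ∧
      ∀ x y : DNode n k, DPillarEdge n k x y ↔ DPillarEdge n k (φ x) (φ y) := by
  set d : ZMod k := w.1 - u.1 with hd
  set t : ZMod k → ZMod (n / 2) := fun i => w.2 i - u.2 (i - d) with ht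
  refine ⟨⟨fun p => (p.1 + d, fun i => p.2 (i - d) + t i),
          fun p => (p.1 - d, fun j => p.2 (j + d) - t (j + d)), ?_, ?_⟩, ?_, ?_⟩
  · intro p; ext <;> simp
  · intro p; ext <;> simp
  · show (u.1 + d, fun i => u.2 (i - d) + t i) = w
    ext i
    · simp [hd]
    · simp [ht]
  · intro x y
    show DPillarEdge n k x y ↔ DPillarEdge n k
      (x.1 + d, fun i => x.2 (i - d) + t i) (y.1 + d, fun i => y.2 (i - d) + t i)
    unfold DPillarEdge
    simp only
    rw [add_right_comm x.1 d 1, add_left_inj, add_sub_right_comm x.1 d 1, add_left_inj,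
      add_left_inj,
      dpillar_cond_iff d x.1 t y.2 x.2, dpillar_cond_iff d (x.1 - 1) t y.2 x.2,
      ne_eq]
    simp only [ne_eq, dpillar_eq_iff]
end
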